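/- Let G be a second-countable locally compact Hausdorff group and let (α,𝔲): G ↷ A, (β,𝔳): G ↷ B, (γ,𝔴): G ↷ C be twisted actions on separable unital C*-algebras. Let (φ,u): (A,α,𝔲) → (B,β,𝔳) and (ψ,v): (B,β,𝔳) → (C,γ,𝔴) be cocycle morphisms. If (φ,u) is asymptotically unitarily equivalent to a cocycle conjugacy (A,α,𝔲) → (B,β,𝔳) and (ψ,v) is asymptotically unitarily equivalent to a cocycle conjugacy (B,β,𝔳) → (C,γ,𝔴), then the composition (ψ,v)∘(φ,u) is asymptotically unitarily equivalent to a cocycle conjugacy (A,α,𝔲) → (C,γ,𝔴). -/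

import Mathlib

/-!
Common definitions: twisted actions of a locally compact group on a unital C*-algebra,
cocycle morphisms between them, and (approximate/asymptotic) unitary equivalence.
-/

noncomputable section

/-- `φ⁺(w) = φ(w) + 1 - φ(1)` for a (not necessarily unital) *-homomorphism between unital
C*-algebras. -/
def plusMap {A B : Type*} [CStarAlgebra A] [CStarAlgebra B] (φ : A →⋆ₙₐ[ℂ] B) (w : A) : B :=
  φ w + 1 - φ 1

/-- A twisted action `(α, 𝔲) : G ↷ A` of a topological group on a unital C*-algebra:
a point-norm continuous map `α : G → Aut(A)` and a norm-continuous map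
`𝔲 : G × G → U(A)` satisfying the twisted action identities. -/
structure TwistedAction (G A : Type*) [Group G] [TopologicalSpace G] [CStarAlgebra A] where
  α : G → (A ≃⋆ₐ[ℂ] A)
  α_cont : ∀ a : A, Continuous fun g => α g a
  u : G → G → A
  u_mem : ∀ s t, u s t ∈ unitary A
  u_cont : Continuous fun p : G × G => u p.1 p.2
  α_one : ∀ a : A, α 1 a = a
  α_mul : ∀ s t : G, ∀ a : A, α s (α t a) = u s t * α (s * t) a * star (u s t)
  u_one_left : ∀ s, u 1 s = 1
  u_one_right : ∀ s, u s 1 = 1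
  u_cocycle : ∀ r s t : G, α r (u s t) * u r (s * t) = u r s * u (r * s) t

/-- A cocycle morphism `(φ, u) : (A, α, 𝔲) → (B, β, 𝔳)` between twisted actions on unital
C*-algebras: a *-homomorphism together with a norm-continuous map `u : G → U(B)` satisfying
the equivariance condition and the cocycle identity. -/
structure CocycleMorphism {G A B : Type*} [Group G] [TopologicalSpace G]
    [CStarAlgebra A] [CStarAlgebra B]
    (Sa : TwistedAction G A) (Sb : TwistedAction G B) where
  φ : A →⋆ₙₐ[ℂ] B
  u : G → B
  u_mem : ∀ g, u g ∈ unitary B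
  u_cont : Continuous u
  equivariance : ∀ (g : G) (a : A), u g * Sb.α g (φ a) * star (u g) = φ (Sa.α g a)
  cocycle : ∀ g h : G,
    plusMap φ (Sa.u g h) = u g * Sb.α g (u h) * Sb.u g h * star (u (g * h))

/-- `(ψ, v) ⪅ᵤ (φ, u)` : the pair `(ψ, v)` is approximately unitarily dominated by `(φ, u)`,
i.e. for every `ε > 0`, finite `F ⊆ A` and compact `K ⊆ G` there is a unitary `w ∈ U(B)` with
`‖ψ(a) - w φ(a) w*‖ ≤ ε` on `F` and `‖v_g - w u_g β_g(w)*‖ ≤ ε` on `K`. -/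
def ApproxUDom {G A B : Type*} [Group G] [TopologicalSpace G]
    [CStarAlgebra A] [CStarAlgebra B] (Sb : TwistedAction G B)
    (ψ : A → B) (v : G → B) (φ : A → B) (u : G → B) : Prop :=
  ∀ ε > (0 : ℝ), ∀ F : Finset A, ∀ K : Set G, IsCompact K →
    ∃ w ∈ unitary B,
      (∀ a ∈ F, ‖ψ a - w * φ a * star w‖ ≤ ε) ∧
      (∀ g ∈ K, ‖v g - w * u g * star (Sb.α g w)‖ ≤ ε)

/-- `(φ, u) ≈ₐᵤ (ψ, v)` : asymptotic unitary equivalence of pairs, witnessed by a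
norm-continuous path of unitaries `w : [0,∞) → U(B)` with
`lim_t ‖ψ(a) - w_t φ(a) w_t*‖ = 0` and `lim_t max_{g ∈ K} ‖v_g - w_t u_g β_g(w_t)*‖ = 0`. -/
def AsympUEquiv {G A B : Type*} [Group G] [TopologicalSpace G]
    [CStarAlgebra A] [CStarAlgebra B] (Sb : TwistedAction G B)
    (φ : A → B) (u : G → B) (ψ : A → B) (v : G → B) : Prop :=
  ∃ w : ℝ → B, Continuous w ∧ (∀ t, w t ∈ unitary B) ∧
    (∀ a : A,
      Filter.Tendsto (fun t => ‖ψ a - w t * φ a * star (w t)‖) Filter.atTop (nhds 0)) ∧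
    (∀ K : Set G, IsCompact K → ∀ ε > (0 : ℝ), ∀ᶠ t in Filter.atTop,
      ∀ g ∈ K, ‖v g - w t * u g * star (Sb.α g (w t))‖ ≤ ε)

end

/-!
If a path of unitaries `w_t` implements `(φ, u) ≈ₐᵤ (φ', u')`, then `ψ⁺(w_t)` implements
`(ψ, v) ∘ (φ, u) ≈ₐᵤ (ψ, v) ∘ (φ', u')`. If `x_t` implements `(ψ, v) ≈ₐᵤ (ψ', v')`, then `x_t`
itself implements `(ψ, v) ∘ (φ, u) ≈ₐᵤ (ψ', v') ∘ (φ, u)`: the only point is that the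
convergence `x_t ψ(b) x_t* → ψ'(b)` is uniform for `b` in the compact set `u(K)`, because these
maps are contractive. As `≈ₐᵤ` is transitive and cocycle conjugacies compose,
`(ψ, v) ∘ (φ, u) ≈ₐᵤ (ψ', v') ∘ (φ, u) ≈ₐᵤ (ψ', v') ∘ (φ', u')` with `(ψ', v') ∘ (φ', u')` a
cocycle conjugacy.
-/

open Filter Topology NNReal

theorem LipschitzWith.tendstoUniformlyOn_of_tendsto {ι X α : Type*} [PseudoMetricSpace X]
    [PseudoMetricSpace α] {F : ι → X → α} {f : X → α} {K : ℝ≥0} {l : Filter ι}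
    (hF : ∀ i, LipschitzWith K (F i)) (h : ∀ x, Tendsto (fun i => F i x) l (𝓝 (f x)))
    {S : Set X} (hS : IsCompact S) : TendstoUniformlyOn F f l S := by
  have : CompactSpace S := isCompact_iff_compactSpace.mp hS
  have h_equi : Equicontinuous fun i => S.domRestrict (F i) :=
    (LipschitzWith.uniformEquicontinuous _ K fun i => (hF i).restrict S).equicontinuous
  rw [tendstoUniformlyOn_iff_tendstoUniformly_comp_coe]
  exact UniformFun.tendsto_iff_tendstoUniformly.mp
    ((h_equi.tendsto_uniformFun_iff_pi l _).mpr (tendsto_pi_nhds.mpr fun x => h x))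

section UnitaryNorm

variable {E : Type*} [NormedRing E] [StarRing E] [CStarRing E]

theorem norm_mul_mul_of_mem_unitary {u v : E} (hu : u ∈ unitary E) (hv : v ∈ unitary E)
    (a : E) : ‖u * a * v‖ = ‖a‖ := by
  rw [CStarRing.norm_mul_mem_unitary _ hv, CStarRing.norm_mem_unitary_mul _ hu]

theorem norm_sub_mul_mul_mul_le {y y' : E} (hy : y ∈ unitary E) (hy' : y' ∈ unitary E)
    (a b c x x' : E) : ‖c - y * x * a * (x' * y')‖ ≤ ‖c - y * b * y'‖ + ‖b - x * a * x'‖ := by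
  have h : c - y * x * a * (x' * y') = (c - y * b * y') + y * (b - x * a * x') * y' := by
    noncomm_ring
  rw [h, ← norm_mul_mul_of_mem_unitary hy hy' (b - x * a * x')]
  exact norm_add_le _ _

theorem norm_mul_sub_mul_mul_mul_le {p x z : E} (hp : p ∈ unitary E) (hx : x ∈ unitary E)
    (p' q q' : E) (hxz : x * q' * z ∈ unitary E) :
    ‖p * q - x * (p' * q') * z‖ ≤ ‖p - x * p' * star x‖ + ‖q - x * q' * z‖ := by
  have h : p * q - x * (p' * q') * z
      = (p - x * p' * star x) * (x * q' * z) + p * (q - x * q' * z) := by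
    simp only [mul_sub, sub_mul, mul_assoc, Unitary.star_mul_self_of_mem hx,
      ← mul_assoc (star x), one_mul]
    abel
  rw [h, ← CStarRing.norm_mem_unitary_mul (q - x * q' * z) hp,
    ← CStarRing.norm_mul_mem_unitary (p - x * p' * star x) hxz]
  exact norm_add_le _ _

end UnitaryNorm

section PlusMap

variable {A B C : Type*} [CStarAlgebra A] [CStarAlgebra B] [CStarAlgebra C] (φ : A →⋆ₙₐ[ℂ] B)

theorem plusMap_one : plusMap φ 1 = 1 := by
  simp [plusMap]

theorem plusMap_mul_map (x y : A) : plusMap φ x * φ y = φ (x * y) := by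
  simp [plusMap, add_mul, sub_mul, ← map_mul]

theorem map_mul_plusMap (x y : A) : φ x * plusMap φ y = φ (x * y) := by
  simp [plusMap, mul_add, mul_sub, ← map_mul]

theorem plusMap_mul (x y : A) : plusMap φ (x * y) = plusMap φ x * plusMap φ y := by
  simp only [plusMap, mul_add, add_mul, mul_sub, sub_mul, ← map_mul, one_mul, mul_one]
  abel

theorem plusMap_star (x : A) : plusMap φ (star x) = star (plusMap φ x) := by
  simp [plusMap, ← map_star]

theorem plusMap_sub_plusMap (x y : A) : plusMap φ x - plusMap φ y = φ (x - y) := by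
  simp only [plusMap, map_sub]
  abel

theorem plusMap_mem_unitary {u : A} (hu : u ∈ unitary A) : plusMap φ u ∈ unitary B := by
  rw [Unitary.mem_iff] at hu ⊢
  simp only [← plusMap_star, ← plusMap_mul, hu.1, hu.2, plusMap_one, and_self]

open scoped CStarAlgebra in
theorem continuous_plusMap : Continuous (plusMap φ) :=
  ((map_continuous φ).add continuous_const).sub continuous_const

theorem plusMap_comp (ψ : B →⋆ₙₐ[ℂ] C) (x : A) :
    plusMap (ψ.comp φ) x = plusMap ψ (plusMap φ x) := by
  simp only [plusMap, NonUnitalStarAlgHom.comp_apply, map_add, map_sub]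
  abel

theorem plusMap_sub_mul_plusMap_mul_star (ψ : A →⋆ₙₐ[ℂ] B) {x : B} (hx : x ∈ unitary B)
    (a : A) : plusMap ψ a - x * plusMap φ a * star x
      = (ψ a - x * φ a * star x) - (ψ 1 - x * φ 1 * star x) := by
  simp only [plusMap, mul_add, mul_sub, add_mul, sub_mul, mul_one,
    Unitary.mul_star_self_of_mem hx]
  abel

end PlusMap

theorem eventually_forall_norm_sub_mul_mul_star_le {ι B C : Type*} [CStarAlgebra B]
    [CStarAlgebra C] {φ ψ : B →⋆ₙₐ[ℂ] C} {l : Filter ι} {x : ι → C}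
    (hx : ∀ i, x i ∈ unitary C)
    (h : ∀ b, Tendsto (fun i => ‖ψ b - x i * φ b * star (x i)‖) l (𝓝 0))
    {S : Set B} (hS : IsCompact S) {ε : ℝ} (hε : 0 < ε) :
    ∀ᶠ i in l, ∀ b ∈ S, ‖ψ b - x i * φ b * star (x i)‖ ≤ ε := by
  have hLip : ∀ i, LipschitzWith 1 fun b => x i * φ b * star (x i) := fun i =>
    LipschitzWith.of_dist_le_mul fun b c => by
      rw [dist_eq_norm, dist_eq_norm, ← sub_mul, ← mul_sub, ← map_sub,
        norm_mul_mul_of_mem_unitary (hx i) (Unitary.star_mem (hx i)), NNReal.coe_one, one_mul]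
      exact NonUnitalStarAlgHom.norm_apply_le φ _
  have hpt : ∀ b, Tendsto (fun i => x i * φ b * star (x i)) l (𝓝 (ψ b)) := fun b =>
    tendsto_iff_norm_sub_tendsto_zero.mpr (by simpa only [norm_sub_rev] using h b)
  filter_upwards [Metric.tendstoUniformlyOn_iff.mp
    (LipschitzWith.tendstoUniformlyOn_of_tendsto hLip hpt hS) ε hε] with i hi b hb
  exact (dist_eq_norm (ψ b) _ ▸ hi b hb).le

namespace CocycleMorphism

variable {G A B C : Type*} [Group G] [TopologicalSpace G]
  [CStarAlgebra A] [CStarAlgebra B] [CStarAlgebra C]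
  {Sα : TwistedAction G A} {Sβ : TwistedAction G B} {Sγ : TwistedAction G C}

theorem plusMap_map_α (P : CocycleMorphism Sα Sβ) (g : G) (a : A) :
    plusMap P.φ (Sα.α g a) = P.u g * Sβ.α g (plusMap P.φ a) * star (P.u g) := by
  have h_one : P.φ 1 = P.u g * Sβ.α g (P.φ 1) * star (P.u g) := by
    rw [P.equivariance, map_one (Sα.α g)]
  rw [plusMap, ← P.equivariance, h_one, plusMap]
  simp only [map_add, map_sub, map_one, mul_add, mul_sub, add_mul, sub_mul, mul_one,
    Unitary.mul_star_self_of_mem (P.u_mem g)]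

theorem plusMap_map_α_mul (P : CocycleMorphism Sα Sβ) (g : G) (a : A) :
    plusMap P.φ (Sα.α g a) * P.u g = P.u g * Sβ.α g (plusMap P.φ a) := by
  rw [plusMap_map_α, mul_assoc _ (star _), Unitary.star_mul_self_of_mem (P.u_mem g), mul_one]

noncomputable def comp (Q : CocycleMorphism Sβ Sγ) (P : CocycleMorphism Sα Sβ) : CocycleMorphism Sα Sγ where
  φ := Q.φ.comp P.φ
  u g := plusMap Q.φ (P.u g) * Q.u g
  u_mem g := mul_mem (plusMap_mem_unitary Q.φ (P.u_mem g)) (Q.u_mem g)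
  u_cont := ((continuous_plusMap Q.φ).comp P.u_cont).mul Q.u_cont
  equivariance g a := by
    calc _ = plusMap Q.φ (P.u g) * (Q.u g * Sγ.α g (Q.φ (P.φ a)) * star (Q.u g))
          * plusMap Q.φ (star (P.u g)) := by
          simp only [star_mul, plusMap_star, NonUnitalStarAlgHom.comp_apply, mul_assoc]
      _ = Q.φ (P.u g * Sβ.α g (P.φ a) * star (P.u g)) := by
          rw [Q.equivariance, plusMap_mul_map, map_mul_plusMap]
      _ = _ := by rw [P.equivariance, NonUnitalStarAlgHom.comp_apply]
  cocycle g h := by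
    rw [plusMap_comp, P.cocycle, plusMap_mul, plusMap_mul, plusMap_mul, plusMap_star,
      plusMap_map_α, Q.cocycle, map_mul, star_mul]
    simp only [mul_assoc, ← mul_assoc (star (Q.u g)), Unitary.star_mul_self_of_mem (Q.u_mem g),
      one_mul]

end CocycleMorphism

namespace AsympUEquiv

section Trans

variable {G A B : Type*} [Group G] [TopologicalSpace G] [CStarAlgebra A] [CStarAlgebra B]
  {S : TwistedAction G B}

theorem trans {φ₁ φ₂ φ₃ : A → B} {u₁ u₂ u₃ : G → B} (h₁₂ : AsympUEquiv S φ₁ u₁ φ₂ u₂)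
    (h₂₃ : AsympUEquiv S φ₂ u₂ φ₃ u₃) : AsympUEquiv S φ₁ u₁ φ₃ u₃ := by
  obtain ⟨x, hx_cont, hx_mem, hx_pt, hx_unif⟩ := h₁₂
  obtain ⟨y, hy_cont, hy_mem, hy_pt, hy_unif⟩ := h₂₃
  refine ⟨fun t => y t * x t, hy_cont.mul hx_cont, fun t => mul_mem (hy_mem t) (hx_mem t),
    fun a => ?_, fun K hK ε hε => ?_⟩
  · refine squeeze_zero (fun _ => norm_nonneg _) (fun t => ?_) (by
      simpa only [add_zero] using (hy_pt a).add (hx_pt a))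
    rw [star_mul]
    exact norm_sub_mul_mul_mul_le (hy_mem t) (Unitary.star_mem (hy_mem t)) _ (φ₂ a) _ _ _
  · filter_upwards [hy_unif K hK (ε / 2) (half_pos hε), hx_unif K hK (ε / 2) (half_pos hε)]
      with t hy hx g hg
    rw [map_mul, star_mul]
    calc _ ≤ ‖u₃ g - y t * u₂ g * star (S.α g (y t))‖
          + ‖u₂ g - x t * u₁ g * star (S.α g (x t))‖ :=
          norm_sub_mul_mul_mul_le (hy_mem t)
            (Unitary.star_mem (Unitary.map_mem (S.α g) (hy_mem t))) _ _ _ _ _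
      _ ≤ ε := by linarith [hy g hg, hx g hg]

end Trans

variable {G A B C : Type*} [Group G] [TopologicalSpace G]
  [CStarAlgebra A] [CStarAlgebra B] [CStarAlgebra C]
  {Sα : TwistedAction G A} {Sβ : TwistedAction G B} {Sγ : TwistedAction G C}

theorem comp_left (Q : CocycleMorphism Sβ Sγ) {P P' : CocycleMorphism Sα Sβ}
    (h : AsympUEquiv Sβ P.φ P.u P'.φ P'.u) :
    AsympUEquiv Sγ (Q.comp P).φ (Q.comp P).u (Q.comp P').φ (Q.comp P').u := by
  obtain ⟨w, hw_cont, hw_mem, hw_pt, hw_unif⟩ := h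
  refine ⟨fun t => plusMap Q.φ (w t), (continuous_plusMap Q.φ).comp hw_cont,
    fun t => plusMap_mem_unitary Q.φ (hw_mem t), fun a => ?_, fun K hK ε hε => ?_⟩
  · refine squeeze_zero (fun _ => norm_nonneg _) (fun t => ?_) (hw_pt a)
    have h_eq : Q.φ (P'.φ a) - plusMap Q.φ (w t) * Q.φ (P.φ a) * star (plusMap Q.φ (w t))
        = Q.φ (P'.φ a - w t * P.φ a * star (w t)) := by
      rw [← plusMap_star, plusMap_mul_map, map_mul_plusMap, map_sub]
    exact h_eq ▸ NonUnitalStarAlgHom.norm_apply_le Q.φ _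
  · filter_upwards [hw_unif K hK ε hε] with t ht g hg
    have h_eq : plusMap Q.φ (P'.u g) * Q.u g
          - plusMap Q.φ (w t) * (plusMap Q.φ (P.u g) * Q.u g)
            * star (Sγ.α g (plusMap Q.φ (w t)))
        = Q.φ (P'.u g - w t * P.u g * star (Sβ.α g (w t))) * Q.u g := by
      rw [← map_star, ← plusMap_star, mul_assoc, mul_assoc, ← Q.plusMap_map_α_mul, map_star]
      simp only [← mul_assoc, ← plusMap_mul]
      rw [← sub_mul, plusMap_sub_plusMap]
    calc _ = ‖Q.φ (P'.u g - w t * P.u g * star (Sβ.α g (w t))) * Q.u g‖ := congrArg norm h_eq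
      _ = ‖Q.φ (P'.u g - w t * P.u g * star (Sβ.α g (w t)))‖ :=
          CStarRing.norm_mul_mem_unitary _ (Q.u_mem g)
      _ ≤ ε := (NonUnitalStarAlgHom.norm_apply_le Q.φ _).trans (ht g hg)

theorem comp_right (P : CocycleMorphism Sα Sβ) {Q Q' : CocycleMorphism Sβ Sγ}
    (h : AsympUEquiv Sγ Q.φ Q.u Q'.φ Q'.u) :
    AsympUEquiv Sγ (Q.comp P).φ (Q.comp P).u (Q'.comp P).φ (Q'.comp P).u := by
  obtain ⟨x, hx_cont, hx_mem, hx_pt, hx_unif⟩ := h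
  refine ⟨x, hx_cont, hx_mem, fun a => hx_pt (P.φ a), fun K hK ε hε => ?_⟩
  have hε3 : 0 < ε / 3 := by positivity
  filter_upwards [eventually_forall_norm_sub_mul_mul_star_le hx_mem hx_pt (hK.image P.u_cont) hε3,
    (hx_pt 1).eventually (ge_mem_nhds hε3), hx_unif K hK (ε / 3) hε3] with t h_unif h_one h_cocycle g hg
  have hxvx : x t * Q.u g * star (Sγ.α g (x t)) ∈ unitary C :=
    mul_mem (mul_mem (hx_mem t) (Q.u_mem g))
      (Unitary.star_mem (Unitary.map_mem (Sγ.α g) (hx_mem t)))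
  calc _ ≤ ‖plusMap Q'.φ (P.u g) - x t * plusMap Q.φ (P.u g) * star (x t)‖
        + ‖Q'.u g - x t * Q.u g * star (Sγ.α g (x t))‖ :=
        norm_mul_sub_mul_mul_mul_le (plusMap_mem_unitary Q'.φ (P.u_mem g)) (hx_mem t) _ _ _ hxvx
    _ ≤ (‖Q'.φ (P.u g) - x t * Q.φ (P.u g) * star (x t)‖
          + ‖Q'.φ 1 - x t * Q.φ 1 * star (x t)‖)
        + ‖Q'.u g - x t * Q.u g * star (Sγ.α g (x t))‖ := by
        rw [plusMap_sub_mul_plusMap_mul_star _ _ (hx_mem t)]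
        gcongr
        exact norm_sub_le _ _
    _ ≤ ε := by linarith [h_unif _ ⟨g, hg, rfl⟩, h_cocycle g hg]

end AsympUEquiv

theorem asympUEquiv_cocycleConjugacy_comp_general
    {G A B C : Type*} [Group G] [TopologicalSpace G]
    [CStarAlgebra A] [CStarAlgebra B] [CStarAlgebra C]
    (Sα : TwistedAction G A) (Sβ : TwistedAction G B) (Sγ : TwistedAction G C)
    (P : CocycleMorphism Sα Sβ) (Q : CocycleMorphism Sβ Sγ)
    (hP : ∃ Φ : CocycleMorphism Sα Sβ, Function.Bijective Φ.φ ∧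
      AsympUEquiv Sβ P.φ P.u Φ.φ Φ.u)
    (hQ : ∃ Ψ : CocycleMorphism Sβ Sγ, Function.Bijective Ψ.φ ∧
      AsympUEquiv Sγ Q.φ Q.u Ψ.φ Ψ.u) :
    ∃ Θ : CocycleMorphism Sα Sγ, Function.Bijective Θ.φ ∧
      AsympUEquiv Sγ
        (fun a => Q.φ (P.φ a)) (fun g => plusMap Q.φ (P.u g) * Q.u g)
        Θ.φ Θ.u := by
  obtain ⟨Φ, hΦ, hPΦ⟩ := hP
  obtain ⟨Ψ, hΨ, hQΨ⟩ := hQ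
  exact ⟨Ψ.comp Φ, hΨ.comp hΦ, (hQΨ.comp_right P).trans (hPΦ.comp_left Ψ)⟩

/-- If two cocycle morphisms between twisted actions on separable unital
C*-algebras are each asymptotically unitarily equivalent to a cocycle conjugacy, then so is
their composition. -/
theorem asympUEquiv_cocycleConjugacy_comp
    {G A B C : Type*} [Group G] [TopologicalSpace G] [IsTopologicalGroup G]
    [LocallyCompactSpace G] [SecondCountableTopology G] [T2Space G]
    [CStarAlgebra A] [CStarAlgebra B] [CStarAlgebra C]
    [TopologicalSpace.SeparableSpace A] [TopologicalSpace.SeparableSpace B]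
    [TopologicalSpace.SeparableSpace C]
    (Sα : TwistedAction G A) (Sβ : TwistedAction G B) (Sγ : TwistedAction G C)
    (P : CocycleMorphism Sα Sβ) (Q : CocycleMorphism Sβ Sγ)
    (hP : ∃ Φ : CocycleMorphism Sα Sβ, Function.Bijective Φ.φ ∧
      AsympUEquiv Sβ P.φ P.u Φ.φ Φ.u)
    (hQ : ∃ Ψ : CocycleMorphism Sβ Sγ, Function.Bijective Ψ.φ ∧
      AsympUEquiv Sγ Q.φ Q.u Ψ.φ Ψ.u) :
    ∃ Θ : CocycleMorphism Sα Sγ, Function.Bijective Θ.φ ∧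
      AsympUEquiv Sγ
        (fun a => Q.φ (P.φ a)) (fun g => plusMap Q.φ (P.u g) * Q.u g)
        Θ.φ Θ.u :=
  asympUEquiv_cocycleConjugacy_comp_general Sα Sβ Sγ P Q hP hQ
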